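/- arXiv:0803.3630 — 5 statements merged into one kernel-verified Lean document; each statement's English description precedes it below -/
import Mathlib

section
/- Let λ ∈ ρ(A_β) and suppose the closed extension à (A_min ⊂ à ⊂ A_max) corresponds to T^λ : V_λ → W_λ̄ as in the λ-dependent parametrization. Then ker(à − λ) = ker T^λ, and ran(à − λ) = ran T^λ ⊕ (H ⊖ W_λ̄) (orthogonal sum). In particular, à − λ is injective iff T^λ is injective, and à − λ is surjective iff T^λ is surjective onto W_λ̄. -/
/-!
Write `pr u = u - R_λ (A - λ) u` for the component of `u ∈ D(A_max)` in `Z_λ`. If `x = pr u₀`,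
then `v = u₀ + R_λ (y - (A - λ) u₀)` still has `pr v = x` while `(A - λ) v = y`; by the graph
description of `D(Ã)` this `v` lies in `D(Ã)` exactly when `T^λ x = P_W y`. So `(Ã - λ) v = y` is
solvable with `pr v = x` iff `T^λ x = P_W y`, which gives both the kernel (`y = 0`, where
`pr v = v`) and the range (`y = T^λ x + w` with `w ⊥ W`).
-/

open scoped InnerProductSpace

section OrthogonalProjection

variable {𝕜 E : Type*} [RCLike 𝕜] [NormedAddCommGroup E] [InnerProductSpace 𝕜 E]
  {K : Submodule 𝕜 E} {P : E → E}

theorem sub_apply_mem_orthogonal (horth : ∀ x, ∀ w ∈ K, ⟪x - P x, w⟫_𝕜 = 0) (x : E) :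
    x - P x ∈ Kᗮ :=
  (K.mem_orthogonal' _).mpr (horth x)

theorem apply_eq_zero_of_mem_orthogonal (hmem : ∀ x, P x ∈ K)
    (horth : ∀ x, ∀ w ∈ K, ⟪x - P x, w⟫_𝕜 = 0) {w : E} (hw : w ∈ Kᗮ) : P w = 0 := by
  have hself : ⟪P w, P w⟫_𝕜 = 0 := by
    calc ⟪P w, P w⟫_𝕜 = ⟪w, P w⟫_𝕜 - ⟪w - P w, P w⟫_𝕜 := by rw [inner_sub_left]; ring
      _ = 0 := by
        rw [K.inner_left_of_mem_orthogonal (hmem w) hw, horth w _ (hmem w), sub_zero]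
  exact inner_self_eq_zero.mp hself

theorem forall_exists_eq_add_mem_orthogonal_iff {ι : Type*} {f : ι → E} (hf : ∀ i, f i ∈ K)
    (hmem : ∀ x, P x ∈ K) (horth : ∀ x, ∀ w ∈ K, ⟪x - P x, w⟫_𝕜 = 0) :
    (∀ y, ∃ i, ∃ w ∈ Kᗮ, y = f i + w) ↔ ∀ k ∈ K, ∃ i, f i = k := by
  constructor
  · intro h k hk
    obtain ⟨i, w, hw, rfl⟩ := h k
    have hwK : w ∈ K := by simpa using K.sub_mem hk (hf i)
    rw [(Submodule.disjoint_def.mp K.orthogonal_disjoint) w hwK hw, add_zero]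
    exact ⟨i, rfl⟩
  · intro h y
    obtain ⟨i, hi⟩ := h (P y) (hmem y)
    exact ⟨i, y - P y, sub_apply_mem_orthogonal horth y, by rw [hi, add_sub_cancel]⟩

end OrthogonalProjection

theorem LinearMap.exists_apply_eq_and_sub_eq_of_rightInverse {R M N : Type*} [Ring R]
    [AddCommGroup M] [AddCommGroup N] [Module R M] [Module R N] (L : M →ₗ[R] N)
    (S : N →ₗ[R] M) (hLS : Function.RightInverse S L) (u₀ : M) (y : N) :
    ∃ v, L v = y ∧ v - S (L v) = u₀ - S (L u₀) :=
  ⟨u₀ + S (y - L u₀), by simp [hLS _], by simp only [map_add, map_sub, hLS _]; abel⟩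

namespace ExtensionParametrization

variable {H : Type*} [NormedAddCommGroup H] [InnerProductSpace ℂ H]
  {D Dβ DAt : Submodule ℂ H} {A : D →ₗ[ℂ] H} {μ : ℂ} {Rμ : H →L[ℂ] H}
  {W : Submodule ℂ H} {PW : H →L[ℂ] H} {Tμ : H →ₗ.[ℂ] H}

theorem exists_domain_apply_eq
    (hchar : ∀ u : D, (u : H) ∈ DAt ↔
      ∃ hx : ((u : H) - Rμ (A u - μ • (u : H))) ∈ Tμ.domain,
        PW (A u - μ • (u : H)) = Tμ ⟨(u : H) - Rμ (A u - μ • (u : H)), hx⟩)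
    {u : D} (hu : (u : H) ∈ DAt) :
    ∃ x : Tμ.domain, (x : H) = (u : H) - Rμ (A u - μ • (u : H)) ∧
      Tμ x = PW (A u - μ • (u : H)) := by
  obtain ⟨hx, hT⟩ := (hchar u).mp hu
  exact ⟨⟨_, hx⟩, rfl, hT.symm⟩

theorem exists_mem_apply_eq_of_apply_eq (hβD : Dβ ≤ D) (hμran : ∀ f : H, Rμ f ∈ Dβ)
    (hμright : ∀ f : H, A ⟨Rμ f, hβD (hμran f)⟩ - μ • Rμ f = f)
    (hTdom : ∀ x ∈ Tμ.domain, ∃ u : D, (u : H) - Rμ (A u - μ • (u : H)) = x)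
    (hchar : ∀ u : D, (u : H) ∈ DAt ↔
      ∃ hx : ((u : H) - Rμ (A u - μ • (u : H))) ∈ Tμ.domain,
        PW (A u - μ • (u : H)) = Tμ ⟨(u : H) - Rμ (A u - μ • (u : H)), hx⟩)
    {x : Tμ.domain} {y : H} (hxy : Tμ x = PW y) :
    ∃ v : D, (v : H) ∈ DAt ∧ A v - μ • (v : H) = y ∧
      (v : H) - Rμ (A v - μ • (v : H)) = x := by
  obtain ⟨u₀, hpr⟩ := hTdom x x.2
  obtain ⟨v, hv, hvpr⟩ := (A - μ • D.subtype).exists_apply_eq_and_sub_eq_of_rightInverse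
    (Rμ.toLinearMap.codRestrict D fun f => hβD (hμran f)) hμright u₀ y
  replace hv : A v - μ • (v : H) = y := hv
  replace hvpr : (v : H) - Rμ (A v - μ • (v : H)) = x := by
    rw [← hpr]; simpa using congrArg Subtype.val hvpr
  refine ⟨v, (hchar v).mpr ⟨hvpr ▸ x.2, ?_⟩, hv, hvpr⟩
  calc PW (A v - μ • (v : H)) = Tμ x := by rw [hv, hxy]
    _ = _ := congrArg Tμ (Subtype.ext hvpr.symm)

theorem ker_sub_smul_eq_ker (hβD : Dβ ≤ D) (hμran : ∀ f : H, Rμ f ∈ Dβ)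
    (hμright : ∀ f : H, A ⟨Rμ f, hβD (hμran f)⟩ - μ • Rμ f = f)
    (hTdom : ∀ x ∈ Tμ.domain, ∃ u : D, (u : H) - Rμ (A u - μ • (u : H)) = x)
    (hchar : ∀ u : D, (u : H) ∈ DAt ↔
      ∃ hx : ((u : H) - Rμ (A u - μ • (u : H))) ∈ Tμ.domain,
        PW (A u - μ • (u : H)) = Tμ ⟨(u : H) - Rμ (A u - μ • (u : H)), hx⟩) :
    {x : H | ∃ hx : x ∈ D, x ∈ DAt ∧ A ⟨x, hx⟩ = μ • x}
      = {x : H | ∃ hx : x ∈ Tμ.domain, Tμ ⟨x, hx⟩ = 0} := by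
  ext x
  constructor
  · rintro ⟨hxD, hxAt, hAx⟩
    obtain ⟨⟨x', hx'⟩, hxx', hTx'⟩ := exists_domain_apply_eq hchar (u := ⟨x, hxD⟩) hxAt
    simp only [sub_eq_zero.mpr hAx, map_zero, sub_zero] at hxx' hTx'
    subst hxx'
    exact ⟨hx', hTx'⟩
  · rintro ⟨hx, hTx⟩
    obtain ⟨v, hvAt, hv, hvx⟩ := exists_mem_apply_eq_of_apply_eq hβD hμran hμright hTdom hchar
      (x := ⟨x, hx⟩) (y := 0) (by rw [hTx, map_zero])
    rw [hv, map_zero, sub_zero] at hvx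
    subst hvx
    exact ⟨v.2, hvAt, sub_eq_zero.mp hv⟩

theorem range_sub_smul_eq_range_add_orthogonal (hβD : Dβ ≤ D) (hμran : ∀ f : H, Rμ f ∈ Dβ)
    (hμright : ∀ f : H, A ⟨Rμ f, hβD (hμran f)⟩ - μ • Rμ f = f)
    (hPWmem : ∀ x : H, PW x ∈ W) (hPWfix : ∀ w ∈ W, PW w = w)
    (hPWorth : ∀ x : H, ∀ w ∈ W, ⟪x - PW x, w⟫_ℂ = 0) (hTran : ∀ x : Tμ.domain, Tμ x ∈ W)
    (hTdom : ∀ x ∈ Tμ.domain, ∃ u : D, (u : H) - Rμ (A u - μ • (u : H)) = x)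
    (hchar : ∀ u : D, (u : H) ∈ DAt ↔
      ∃ hx : ((u : H) - Rμ (A u - μ • (u : H))) ∈ Tμ.domain,
        PW (A u - μ • (u : H)) = Tμ ⟨(u : H) - Rμ (A u - μ • (u : H)), hx⟩) :
    {y : H | ∃ u : D, (u : H) ∈ DAt ∧ A u - μ • (u : H) = y}
      = {y : H | ∃ x : Tμ.domain, ∃ w ∈ Wᗮ, y = Tμ x + w} := by
  ext y
  constructor
  · rintro ⟨u, hu, rfl⟩
    obtain ⟨x, -, hTx⟩ := exists_domain_apply_eq hchar hu
    exact ⟨x, _, sub_apply_mem_orthogonal hPWorth _, by rw [hTx, add_sub_cancel]⟩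
  · rintro ⟨x, w, hw, rfl⟩
    have hxy : Tμ x = PW (Tμ x + w) := by
      rw [map_add, hPWfix _ (hTran x), apply_eq_zero_of_mem_orthogonal hPWmem hPWorth hw,
        add_zero]
    obtain ⟨v, hvAt, hv, -⟩ := exists_mem_apply_eq_of_apply_eq hβD hμran hμright hTdom hchar hxy
    exact ⟨v, hvAt, hv⟩

end ExtensionParametrization

theorem stmt_5_general
    {H : Type*} [NormedAddCommGroup H] [InnerProductSpace ℂ H]
    (D Dβ DAt : Submodule ℂ H) (hβD : Dβ ≤ D)
    (A : D →ₗ[ℂ] H) (μ : ℂ)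
    (Rμ : H →L[ℂ] H)
    (hμran : ∀ f : H, Rμ f ∈ Dβ)
    (hμright : ∀ f : H, A ⟨Rμ f, hβD (hμran f)⟩ - μ • Rμ f = f)
    -- W_λ̄ : a closed subspace of Z′_λ̄ = ker (A_max′ − λ̄), with orthogonal projection PW
    (W : Submodule ℂ H)
    (PW : H →L[ℂ] H)
    (hPWmem : ∀ x : H, PW x ∈ W)
    (hPWfix : ∀ w ∈ W, PW w = w)
    (hPWorth : ∀ x : H, ∀ w ∈ W, ⟪x - PW x, w⟫_ℂ = 0)
    -- the operator T^λ associated with Ã − λ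
    (Tμ : H →ₗ.[ℂ] H)
    (hTran : ∀ x : Tμ.domain, Tμ x ∈ W)
    (hTdom : ∀ x : H, x ∈ Tμ.domain ↔
      ∃ u : D, (u : H) ∈ DAt ∧ (u : H) - Rμ (A u - μ • (u : H)) = x)
    (hchar : ∀ u : D, (u : H) ∈ DAt ↔
      ∃ hx : ((u : H) - Rμ (A u - μ • (u : H))) ∈ Tμ.domain,
        PW (A u - μ • (u : H)) = Tμ ⟨(u : H) - Rμ (A u - μ • (u : H)), hx⟩) :
    -- ker(Ã − λ) = ker T^λ
    ({x : H | ∃ hx : x ∈ D, x ∈ DAt ∧ A ⟨x, hx⟩ = μ • x}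
      = {x : H | ∃ hx : x ∈ Tμ.domain, Tμ ⟨x, hx⟩ = 0}) ∧
    -- ran(Ã − λ) = ran T^λ ⊕ (H ⊖ W_λ̄), orthogonal sum
    ({y : H | ∃ u : D, (u : H) ∈ DAt ∧ A u - μ • (u : H) = y}
      = {y : H | ∃ x : Tμ.domain, ∃ w ∈ Wᗮ, y = Tμ x + w}) ∧
    -- Ã − λ injective ↔ T^λ injective
    ((∀ u : D, (u : H) ∈ DAt → A u = μ • (u : H) → (u : H) = 0)
      ↔ (∀ x : Tμ.domain, Tμ x = 0 → (x : H) = 0)) ∧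
    -- Ã − λ surjective ↔ T^λ surjective onto W_λ̄
    ((∀ y : H, ∃ u : D, (u : H) ∈ DAt ∧ A u - μ • (u : H) = y)
      ↔ (∀ w ∈ W, ∃ x : Tμ.domain, Tμ x = w)) := by
  have hdom : ∀ x ∈ Tμ.domain, ∃ u : D, (u : H) - Rμ (A u - μ • (u : H)) = x := fun x hx =>
    let ⟨u, _, hu⟩ := (hTdom x).mp hx; ⟨u, hu⟩
  have hker := ExtensionParametrization.ker_sub_smul_eq_ker hβD hμran hμright hdom hchar
  have hran := ExtensionParametrization.range_sub_smul_eq_range_add_orthogonal hβD hμran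
    hμright hPWmem hPWfix hPWorth hTran hdom hchar
  refine ⟨hker, hran, ⟨fun h x hx => ?_, fun h u hu hAu => ?_⟩, ?_⟩
  · obtain ⟨hxD, hxAt, hAx⟩ := (Set.ext_iff.mp hker x).mpr ⟨x.2, hx⟩
    exact h ⟨x, hxD⟩ hxAt hAx
  · obtain ⟨hx, hTx⟩ := (Set.ext_iff.mp hker u).mp ⟨u.2, hu, hAu⟩
    exact h ⟨u, hx⟩ hTx
  · rw [← forall_exists_eq_add_mem_orthogonal_iff hTran hPWmem hPWorth]
    exact forall_congr' fun y => Set.ext_iff.mp hran y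

/-- Let `λ ∈ ρ(A_β)` and suppose the closed extension `Ã`
(`A_min ⊂ Ã ⊂ A_max`) corresponds to `T^λ : V_λ → W_λ̄` as in the λ-dependent
parametrization (Corollary 2.3).  Then `ker (Ã − λ) = ker T^λ` and
`ran (Ã − λ) = ran T^λ ⊕ (H ⊖ W_λ̄)` (orthogonal sum).  In particular `Ã − λ` is
injective iff `T^λ` is injective, and `Ã − λ` is surjective iff `T^λ` is surjective
onto `W_λ̄`.

`A_max` is `A : D →ₗ H`; `Ã` is its restriction to `DAt`; `pr^λ_ζ u = u − (A_β−λ)⁻¹(A−λ)u`;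
`T^λ` is a partially defined operator (`LinearPMap`) with `D(T^λ) = pr^λ_ζ D(Ã)`,
`T^λ (pr^λ_ζ u) = P_W ((A−λ)u)`, whose graph together with `W` determines `D(Ã)` by (2.13). -/
theorem stmt_5
    {H : Type*} [NormedAddCommGroup H] [InnerProductSpace ℂ H] [CompleteSpace H]
    (D D' Dβ DAt : Submodule ℂ H) (hβD : Dβ ≤ D) (hAtD : DAt ≤ D)
    (A : D →ₗ[ℂ] H) (A' : D' →ₗ[ℂ] H) (μ : ℂ)
    (Rμ : H →L[ℂ] H)
    (hμran : ∀ f : H, Rμ f ∈ Dβ)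
    (hμleft : ∀ u : D, (u : H) ∈ Dβ → Rμ (A u - μ • (u : H)) = (u : H))
    (hμright : ∀ f : H, A ⟨Rμ f, hβD (hμran f)⟩ - μ • Rμ f = f)
    -- W_λ̄ : a closed subspace of Z′_λ̄ = ker (A_max′ − λ̄), with orthogonal projection PW
    (W : Submodule ℂ H) (hWclosed : IsClosed (W : Set H))
    (hWZ' : W ≤ (LinearMap.ker (A' - (starRingEnd ℂ μ) • D'.subtype)).map D'.subtype)
    (PW : H →L[ℂ] H)
    (hPWmem : ∀ x : H, PW x ∈ W)
    (hPWfix : ∀ w ∈ W, PW w = w)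
    (hPWorth : ∀ x : H, ∀ w ∈ W, ⟪x - PW x, w⟫_ℂ = 0)
    -- the operator T^λ associated with Ã − λ
    (Tμ : H →ₗ.[ℂ] H)
    (hTran : ∀ x : Tμ.domain, Tμ x ∈ W)
    (hTdom : ∀ x : H, x ∈ Tμ.domain ↔
      ∃ u : D, (u : H) ∈ DAt ∧ (u : H) - Rμ (A u - μ • (u : H)) = x)
    (hTval : ∀ (u : D), (u : H) ∈ DAt →
      ∀ hx : ((u : H) - Rμ (A u - μ • (u : H))) ∈ Tμ.domain,
        Tμ ⟨(u : H) - Rμ (A u - μ • (u : H)), hx⟩ = PW (A u - μ • (u : H)))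
    (hchar : ∀ u : D, (u : H) ∈ DAt ↔
      ∃ hx : ((u : H) - Rμ (A u - μ • (u : H))) ∈ Tμ.domain,
        PW (A u - μ • (u : H)) = Tμ ⟨(u : H) - Rμ (A u - μ • (u : H)), hx⟩) :
    -- ker(Ã − λ) = ker T^λ
    ({x : H | ∃ hx : x ∈ D, x ∈ DAt ∧ A ⟨x, hx⟩ = μ • x}
      = {x : H | ∃ hx : x ∈ Tμ.domain, Tμ ⟨x, hx⟩ = 0}) ∧
    -- ran(Ã − λ) = ran T^λ ⊕ (H ⊖ W_λ̄), orthogonal sum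
    ({y : H | ∃ u : D, (u : H) ∈ DAt ∧ A u - μ • (u : H) = y}
      = {y : H | ∃ x : Tμ.domain, ∃ w ∈ Wᗮ, y = Tμ x + w}) ∧
    -- Ã − λ injective ↔ T^λ injective
    ((∀ u : D, (u : H) ∈ DAt → A u = μ • (u : H) → (u : H) = 0)
      ↔ (∀ x : Tμ.domain, Tμ x = 0 → (x : H) = 0)) ∧
    -- Ã − λ surjective ↔ T^λ surjective onto W_λ̄
    ((∀ y : H, ∃ u : D, (u : H) ∈ DAt ∧ A u - μ • (u : H) = y)
      ↔ (∀ w ∈ W, ∃ x : Tμ.domain, Tμ x = w)) :=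
  stmt_5_general D Dβ DAt hβD A μ Rμ hμran hμright W PW hPWmem hPWfix hPWorth Tμ hTran hTdom hchar
end

section
/- Universal Kreĭn resolvent formula: if λ ∈ ρ(Ã) ∩ ρ(A_β) and à corresponds to T^λ : V_λ → W_λ̄, then T^λ is invertible and (à − λ)^{-1} = (A_β − λ)^{-1} + i_{V_λ→H} (T^λ)^{-1} pr_{W_λ̄}, where pr_{W_λ̄} is the orthogonal projection of H onto W_λ̄ and i_{V_λ→H} the inclusion. -/
open scoped InnerProductSpace

/-!
For `f ∈ H` the vector `u = (Ã − λ)⁻¹ f ∈ D(Ã)` satisfies `(A − λ) u = f`, so its `ζ`-component is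
`(Ã − λ)⁻¹ f − (A_β − λ)⁻¹ f`, and `T^λ` maps it to `pr_W f`. This gives surjectivity of `T^λ`
and, once `T^λ` is injective, the resolvent formula. If `T^λ u_ζ = 0` for some `u ∈ D(Ã)`, then
`pr_W (A − λ) u = 0`, and the characterisation of `D(Ã)` through `T^λ` puts
`v = (A_β − λ)⁻¹ (A − λ) u` (whose `ζ`-component is `0`) into `D(Ã)` as well. Since
`(Ã − λ) u = (Ã − λ) v` and `Ã − λ` is injective, `u = v`, i.e. `u_ζ = 0`.
-/

namespace KreinResolvent

variable {R H : Type*} [Ring R] [AddCommGroup H] [Module R H] {D DAt : Submodule R H}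

/-- The paper's `pr^λ_ζ u = u − (A_β − λ)⁻¹ (A − λ) u`, with `Rβ` standing for `(A_β − λ)⁻¹`. -/
def prZeta (A : D →ₗ[R] H) (μ : R) (Rβ : H → H) (u : D) : H :=
  u - Rβ (A u - μ • (u : H))

variable {A : D →ₗ[R] H} {μ : R} {Rβ RAt PW : H → H} {T : H →ₗ.[R] H}

theorem mem_iff_apply_eq
    (hchar : ∀ u : D, (u : H) ∈ DAt ↔
      ∃ hx : prZeta A μ Rβ u ∈ T.domain, PW (A u - μ • (u : H)) = T ⟨_, hx⟩)
    (u : D) (x : T.domain) (hx : (x : H) = prZeta A μ Rβ u) :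
    (u : H) ∈ DAt ↔ T x = PW (A u - μ • (u : H)) := by
  obtain ⟨x, hxmem⟩ := x
  subst hx
  rw [hchar u]
  exact ⟨fun ⟨_, h⟩ => h.symm, fun h => ⟨hxmem, h.symm⟩⟩

theorem exists_mem_domain_apply_eq
    (hAran : ∀ f, RAt f ∈ DAt) (hAranD : ∀ f, RAt f ∈ D)
    (hAright : ∀ f, A ⟨RAt f, hAranD f⟩ - μ • RAt f = f)
    (hchar : ∀ u : D, (u : H) ∈ DAt ↔
      ∃ hx : prZeta A μ Rβ u ∈ T.domain, PW (A u - μ • (u : H)) = T ⟨_, hx⟩)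
    (f : H) :
    ∃ hx : RAt f - Rβ f ∈ T.domain, T ⟨_, hx⟩ = PW f := by
  let u : D := ⟨RAt f, hAranD f⟩
  have hu : A u - μ • (u : H) = f := hAright f
  have hζ : prZeta A μ Rβ u = RAt f - Rβ f := by rw [prZeta, hu]
  have hx : RAt f - Rβ f ∈ T.domain := hζ ▸ ((hchar u).mp (hAran f)).1
  exact ⟨hx, ((mem_iff_apply_eq hchar u ⟨_, hx⟩ hζ.symm).mp (hAran f)).trans (congrArg PW hu)⟩

theorem eq_zero_of_apply_eq_zero
    (hRβD : ∀ f, Rβ f ∈ D) (hRβright : ∀ f, A ⟨Rβ f, hRβD f⟩ - μ • Rβ f = f)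
    (hAleft : ∀ u : D, (u : H) ∈ DAt → RAt (A u - μ • (u : H)) = u)
    (hTdom : ∀ x, x ∈ T.domain ↔ ∃ u : D, (u : H) ∈ DAt ∧ prZeta A μ Rβ u = x)
    (hchar : ∀ u : D, (u : H) ∈ DAt ↔
      ∃ hx : prZeta A μ Rβ u ∈ T.domain, PW (A u - μ • (u : H)) = T ⟨_, hx⟩)
    (x : T.domain) (hx : T x = 0) : (x : H) = 0 := by
  obtain ⟨u, hu, hxu⟩ := (hTdom x).mp x.2
  set f := A u - μ • (u : H)
  have hPWf : PW f = 0 := by rw [← (mem_iff_apply_eq hchar u x hxu.symm).mp hu, hx]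
  let v : D := ⟨Rβ f, hRβD f⟩
  have hv : A v - μ • (v : H) = f := hRβright f
  have hvζ : ((0 : T.domain) : H) = prZeta A μ Rβ v := by
    rw [prZeta, hv, sub_self, Submodule.coe_zero]
  have hvmem : (v : H) ∈ DAt :=
    (mem_iff_apply_eq hchar v 0 hvζ).mpr (by rw [hv, hPWf, LinearPMap.map_zero])
  have huv : (u : H) = Rβ f :=
    calc (u : H) = RAt f := (hAleft u hu).symm
      _ = RAt (A v - μ • (v : H)) := by rw [hv]
      _ = Rβ f := hAleft v hvmem
  rw [← hxu]
  exact sub_eq_zero.mpr huv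

end KreinResolvent

open KreinResolvent in
theorem stmt_6_general
    {H : Type*} [NormedAddCommGroup H] [InnerProductSpace ℂ H]
    (D Dβ DAt : Submodule ℂ H) (hβD : Dβ ≤ D)
    (A : D →ₗ[ℂ] H) (μ : ℂ)
    -- μ ∈ ρ(A_β): bounded resolvent Rμ of A_β − μ
    (Rμ : H →L[ℂ] H)
    (hμran : ∀ f : H, Rμ f ∈ Dβ)
    (hμright : ∀ f : H, A ⟨Rμ f, hβD (hμran f)⟩ - μ • Rμ f = f)
    -- μ ∈ ρ(Ã): bounded resolvent RAt of Ã − μ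
    (RAt : H →L[ℂ] H)
    (hAran : ∀ f : H, RAt f ∈ DAt)
    (hAranD : ∀ f : H, RAt f ∈ D)
    (hAleft : ∀ u : D, (u : H) ∈ DAt → RAt (A u - μ • (u : H)) = (u : H))
    (hAright : ∀ f : H, A ⟨RAt f, hAranD f⟩ - μ • RAt f = f)
    -- W_λ̄ : a closed subspace of Z′_λ̄ = ker (A_max′ − λ̄), with orthogonal projection PW
    (W : Submodule ℂ H)
    (PW : H →L[ℂ] H)
    (hPWfix : ∀ w ∈ W, PW w = w)
    -- the operator T^λ associated with Ã − λ by the universal parametrization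
    (Tμ : H →ₗ.[ℂ] H)
    (hTdom : ∀ x : H, x ∈ Tμ.domain ↔
      ∃ u : D, (u : H) ∈ DAt ∧ (u : H) - Rμ (A u - μ • (u : H)) = x)
    (hchar : ∀ u : D, (u : H) ∈ DAt ↔
      ∃ hx : ((u : H) - Rμ (A u - μ • (u : H))) ∈ Tμ.domain,
        PW (A u - μ • (u : H)) = Tμ ⟨(u : H) - Rμ (A u - μ • (u : H)), hx⟩) :
    -- T^λ is invertible: injective and surjective onto W_λ̄
    (∀ x : Tμ.domain, Tμ x = 0 → (x : H) = 0) ∧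
    (∀ w ∈ W, ∃ x : Tμ.domain, Tμ x = w) ∧
    -- Kreĭn resolvent formula: (Ã−λ)⁻¹ f = (A_β−λ)⁻¹ f + (T^λ)⁻¹ (PW f)
    (∀ f : H, ∀ x : Tμ.domain, Tμ x = PW f → RAt f = Rμ f + (x : H)) := by
  have inj : ∀ x : Tμ.domain, Tμ x = 0 → (x : H) = 0 :=
    eq_zero_of_apply_eq_zero (fun f => hβD (hμran f)) hμright hAleft hTdom hchar
  have resolvent_sub := exists_mem_domain_apply_eq (Rβ := Rμ) hAran hAranD hAright hchar
  refine ⟨inj, fun w hw => ?_, fun f x hx => ?_⟩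
  · obtain ⟨hy, hTy⟩ := resolvent_sub w
    exact ⟨⟨_, hy⟩, hTy.trans (hPWfix w hw)⟩
  · obtain ⟨hy, hTy⟩ := resolvent_sub f
    have hyx := inj (⟨_, hy⟩ - x) (by rw [Tμ.map_sub, hTy, hx, sub_self])
    rw [Submodule.coe_sub, sub_eq_zero] at hyx
    rw [← hyx, add_sub_cancel]

/-- **universal Kreĭn resolvent formula.** If `λ ∈ ρ(Ã) ∩ ρ(A_β)` and `Ã`
corresponds to `T^λ : V_λ → W_λ̄`, then `T^λ` is invertible and
`(Ã − λ)⁻¹ = (A_β − λ)⁻¹ + i_{V_λ→H} (T^λ)⁻¹ pr_{W_λ̄}`, where `pr_{W_λ̄} = PW` is the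
orthogonal projection of `H` onto `W_λ̄` and `i` the inclusion. -/
theorem stmt_6
    {H : Type*} [NormedAddCommGroup H] [InnerProductSpace ℂ H] [CompleteSpace H]
    (D D' Dβ DAt : Submodule ℂ H) (hβD : Dβ ≤ D) (hAtD : DAt ≤ D)
    (A : D →ₗ[ℂ] H) (A' : D' →ₗ[ℂ] H) (μ : ℂ)
    -- μ ∈ ρ(A_β): bounded resolvent Rμ of A_β − μ
    (Rμ : H →L[ℂ] H)
    (hμran : ∀ f : H, Rμ f ∈ Dβ)
    (hμleft : ∀ u : D, (u : H) ∈ Dβ → Rμ (A u - μ • (u : H)) = (u : H))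
    (hμright : ∀ f : H, A ⟨Rμ f, hβD (hμran f)⟩ - μ • Rμ f = f)
    -- μ ∈ ρ(Ã): bounded resolvent RAt of Ã − μ
    (RAt : H →L[ℂ] H)
    (hAran : ∀ f : H, RAt f ∈ DAt)
    (hAranD : ∀ f : H, RAt f ∈ D)
    (hAleft : ∀ u : D, (u : H) ∈ DAt → RAt (A u - μ • (u : H)) = (u : H))
    (hAright : ∀ f : H, A ⟨RAt f, hAranD f⟩ - μ • RAt f = f)
    -- W_λ̄ : a closed subspace of Z′_λ̄ = ker (A_max′ − λ̄), with orthogonal projection PW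
    (W : Submodule ℂ H) (hWclosed : IsClosed (W : Set H))
    (hWZ' : W ≤ (LinearMap.ker (A' - (starRingEnd ℂ μ) • D'.subtype)).map D'.subtype)
    (PW : H →L[ℂ] H)
    (hPWmem : ∀ x : H, PW x ∈ W)
    (hPWfix : ∀ w ∈ W, PW w = w)
    (hPWorth : ∀ x : H, ∀ w ∈ W, ⟪x - PW x, w⟫_ℂ = 0)
    -- the operator T^λ associated with Ã − λ by the universal parametrization
    (Tμ : H →ₗ.[ℂ] H)
    (hTran : ∀ x : Tμ.domain, Tμ x ∈ W)
    (hTdom : ∀ x : H, x ∈ Tμ.domain ↔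
      ∃ u : D, (u : H) ∈ DAt ∧ (u : H) - Rμ (A u - μ • (u : H)) = x)
    (hTval : ∀ (u : D), (u : H) ∈ DAt →
      ∀ hx : ((u : H) - Rμ (A u - μ • (u : H))) ∈ Tμ.domain,
        Tμ ⟨(u : H) - Rμ (A u - μ • (u : H)), hx⟩ = PW (A u - μ • (u : H)))
    (hchar : ∀ u : D, (u : H) ∈ DAt ↔
      ∃ hx : ((u : H) - Rμ (A u - μ • (u : H))) ∈ Tμ.domain,
        PW (A u - μ • (u : H)) = Tμ ⟨(u : H) - Rμ (A u - μ • (u : H)), hx⟩) :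
    -- T^λ is invertible: injective and surjective onto W_λ̄
    (∀ x : Tμ.domain, Tμ x = 0 → (x : H) = 0) ∧
    (∀ w ∈ W, ∃ x : Tμ.domain, Tμ x = w) ∧
    -- Kreĭn resolvent formula: (Ã−λ)⁻¹ f = (A_β−λ)⁻¹ f + (T^λ)⁻¹ (PW f)
    (∀ f : H, ∀ x : Tμ.domain, Tμ x = PW f → RAt f = Rμ f + (x : H)) :=
  stmt_6_general D Dβ DAt hβD A μ Rμ hμran hμright RAt hAran hAranD hAleft hAright W PW hPWfix Tμ
    hTdom hchar
end

section
/- If the closed extension à corresponds to T : V → W by the universal parametrization and à (equivalently T) is injective, then on ran à one has Ã^{-1} = A_β^{-1} + T^{-1} ∘ pr_W, where pr_W is the orthogonal projection onto W. -/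
open scoped InnerProductSpace

/-!
Write `u ∈ D(Ã)` as `u = A_β⁻¹ A u + u_ζ` with `u_ζ ∈ ker A_max`. The parametrization says
`u ∈ D(Ã)` exactly when `u_ζ ∈ D(T)` and `T u_ζ = pr_W A u`, which is already the claimed formula
for `Ã⁻¹ (A u)`. If `T u_ζ = 0`, then `u_ζ` itself lies in `D(Ã)` (its own `ζ`-component is
`u_ζ`, and `pr_W A u_ζ = 0`) and is annihilated by `A`, so injectivity of `Ã` forces `u_ζ = 0`.
-/

section Parametrization

variable {R H : Type*} [Ring R] [AddCommGroup H] [Module R H] {D : Submodule R H}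
  {DAt : Set H} {A : D →ₗ[R] H} {Aβinv PW : H →ₗ[R] H} {T : H →ₗ.[R] H}

theorem map_sub_rightInverse_eq_zero (hran : ∀ f, Aβinv f ∈ D)
    (hright : ∀ f, A ⟨Aβinv f, hran f⟩ = f) (u : D) :
    A (u - ⟨Aβinv (A u), hran (A u)⟩) = 0 := by
  rw [map_sub, hright, sub_self]

theorem mem_of_map_eq_zero_of_apply_eq_zero
    (hchar : ∀ u : D, (u : H) ∈ DAt ↔
      ∃ hx : (u : H) - Aβinv (A u) ∈ T.domain, PW (A u) = T ⟨(u : H) - Aβinv (A u), hx⟩)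
    {z : D} (hAz : A z = 0) (hz : (z : H) ∈ T.domain) (hTz : T ⟨z, hz⟩ = 0) :
    (z : H) ∈ DAt := by
  have hzeta : (z : H) - Aβinv (A z) = z := by rw [hAz, map_zero, sub_zero]
  have hz' : (z : H) - Aβinv (A z) ∈ T.domain := by rwa [hzeta]
  refine (hchar z).2 ⟨hz', ?_⟩
  have hpt : (⟨(z : H) - Aβinv (A z), hz'⟩ : T.domain) = ⟨z, hz⟩ := Subtype.ext hzeta
  rw [hpt, hTz, hAz, map_zero]

theorem coe_eq_zero_of_apply_eq_zero (hran : ∀ f, Aβinv f ∈ D)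
    (hright : ∀ f, A ⟨Aβinv f, hran f⟩ = f)
    (hdom : ∀ x : H, x ∈ T.domain ↔ ∃ u : D, (u : H) ∈ DAt ∧ (u : H) - Aβinv (A u) = x)
    (hchar : ∀ u : D, (u : H) ∈ DAt ↔
      ∃ hx : (u : H) - Aβinv (A u) ∈ T.domain, PW (A u) = T ⟨(u : H) - Aβinv (A u), hx⟩)
    (hinj : ∀ u : D, (u : H) ∈ DAt → A u = 0 → (u : H) = 0)
    (x : T.domain) (hTx : T x = 0) : (x : H) = 0 := by
  obtain ⟨x, hx⟩ := x
  obtain ⟨u, hu, rfl⟩ := (hdom x).1 hx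
  set z : D := u - ⟨Aβinv (A u), hran (A u)⟩
  have hAz : A z = 0 := map_sub_rightInverse_eq_zero hran hright u
  exact hinj z (mem_of_map_eq_zero_of_apply_eq_zero hchar hAz hx hTx) hAz

end Parametrization

theorem stmt_7_general
    {H : Type*} [NormedAddCommGroup H] [InnerProductSpace ℂ H]
    (D Dβ DAt : Submodule ℂ H) (hβD : Dβ ≤ D)
    (A : D →ₗ[ℂ] H)
    -- 0 ∈ ρ(A_β): bounded everywhere defined inverse Aβinv
    (Aβinv : H →L[ℂ] H)
    (h0ran : ∀ f : H, Aβinv f ∈ Dβ)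
    (h0right : ∀ f : H, A ⟨Aβinv f, hβD (h0ran f)⟩ = f)
    (PW : H →L[ℂ] H)
    -- the operator T : V → W associated with Ã by Theorem 2.1
    (T : H →ₗ.[ℂ] H)
    (hTdom : ∀ x : H, x ∈ T.domain ↔
      ∃ u : D, (u : H) ∈ DAt ∧ (u : H) - Aβinv (A u) = x)
    (hchar : ∀ u : D, (u : H) ∈ DAt ↔
      ∃ hx : ((u : H) - Aβinv (A u)) ∈ T.domain,
        PW (A u) = T ⟨(u : H) - Aβinv (A u), hx⟩)
    -- Ã is injective
    (hinj : ∀ u : D, (u : H) ∈ DAt → A u = 0 → (u : H) = 0) :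
    -- T is injective and Ã⁻¹ = A_β⁻¹ + T⁻¹ ∘ pr_W on ran Ã
    (∀ x : T.domain, T x = 0 → (x : H) = 0) ∧
    (∀ u : D, (u : H) ∈ DAt →
      ∃ x : T.domain, T x = PW (A u) ∧ (u : H) = Aβinv (A u) + (x : H)) := by
  refine ⟨coe_eq_zero_of_apply_eq_zero (fun f => hβD (h0ran f)) h0right hTdom hchar hinj,
    fun u hu => ?_⟩
  obtain ⟨hx, hTx⟩ := (hchar u).1 hu
  exact ⟨⟨(u : H) - Aβinv (A u), hx⟩, hTx.symm, (add_sub_cancel _ _).symm⟩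

/-- If the closed extension `Ã` corresponds to `T : V → W` by the universal
parametrization and `Ã` (equivalently `T`) is injective, then on `ran Ã` one has
`Ã⁻¹ = A_β⁻¹ + T⁻¹ ∘ pr_W`, where `pr_W = PW` is the orthogonal projection onto `W`:
for every `u ∈ D(Ã)` and `f = Ã u`, `Ã⁻¹ f = A_β⁻¹ f + T⁻¹ (PW f)`. -/
theorem stmt_7
    {H : Type*} [NormedAddCommGroup H] [InnerProductSpace ℂ H] [CompleteSpace H]
    (D D' Dβ DAt : Submodule ℂ H) (hβD : Dβ ≤ D) (hAtD : DAt ≤ D)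
    (A : D →ₗ[ℂ] H) (A' : D' →ₗ[ℂ] H)
    -- 0 ∈ ρ(A_β): bounded everywhere defined inverse Aβinv
    (Aβinv : H →L[ℂ] H)
    (h0ran : ∀ f : H, Aβinv f ∈ Dβ)
    (h0left : ∀ u : D, (u : H) ∈ Dβ → Aβinv (A u) = (u : H))
    (h0right : ∀ f : H, A ⟨Aβinv f, hβD (h0ran f)⟩ = f)
    -- W : a closed subspace of Z′ = ker A_max′, with orthogonal projection PW
    (W : Submodule ℂ H) (hWclosed : IsClosed (W : Set H))
    (hWZ' : W ≤ (LinearMap.ker A').map D'.subtype)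
    (PW : H →L[ℂ] H)
    (hPWmem : ∀ x : H, PW x ∈ W)
    (hPWfix : ∀ w ∈ W, PW w = w)
    (hPWorth : ∀ x : H, ∀ w ∈ W, ⟪x - PW x, w⟫_ℂ = 0)
    -- the operator T : V → W associated with Ã by Theorem 2.1
    (T : H →ₗ.[ℂ] H)
    (hTran : ∀ x : T.domain, T x ∈ W)
    (hTdom : ∀ x : H, x ∈ T.domain ↔
      ∃ u : D, (u : H) ∈ DAt ∧ (u : H) - Aβinv (A u) = x)
    (hTval : ∀ (u : D), (u : H) ∈ DAt →
      ∀ hx : ((u : H) - Aβinv (A u)) ∈ T.domain,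
        T ⟨(u : H) - Aβinv (A u), hx⟩ = PW (A u))
    (hchar : ∀ u : D, (u : H) ∈ DAt ↔
      ∃ hx : ((u : H) - Aβinv (A u)) ∈ T.domain,
        PW (A u) = T ⟨(u : H) - Aβinv (A u), hx⟩)
    -- Ã is injective
    (hinj : ∀ u : D, (u : H) ∈ DAt → A u = 0 → (u : H) = 0) :
    -- T is injective and Ã⁻¹ = A_β⁻¹ + T⁻¹ ∘ pr_W on ran Ã
    (∀ x : T.domain, T x = 0 → (x : H) = 0) ∧
    (∀ u : D, (u : H) ∈ DAt →
      ∃ x : T.domain, T x = PW (A u) ∧ (u : H) = Aβinv (A u) + (x : H)) :=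
  stmt_7_general D Dβ DAt hβD A Aβinv h0ran h0right PW T hTdom hchar hinj
end

section
/- For λ ∈ ρ(A_B), the M-function is well-defined as a map M_B(λ) : Z′ → Z by M_B(λ)(Γ_1 − BΓ_0)u = Γ_0 u for all u ∈ Z_λ with Γ_0 u ∈ D(B); explicitly, M_B(λ) = pr_ζ (I − (A_B − λ)^{-1}(A_max − λ)) A_β^{-1} i_{Z′→H}. In particular, for each f ∈ Z′ there is a unique z^λ ∈ Z_λ with Γ_0 z^λ ∈ D(B) and (Γ_1 − BΓ_0) z^λ = f. -/
open scoped InnerProductSpace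

/-!
Encode the boundary maps as one linear map `Γ = (Γ₀, Γ₁) : D(A_max) → H × H`. Then
`D(A_B) = Γ⁻¹(graph B)`, and `Γ₀ u ∈ D(B)` with `(Γ₁ − BΓ₀) u = f` says `Γ u − (0, f) ∈ graph B`.
Uniqueness: the difference of two solutions lies in `D(A_B) ∩ ker (A_max − λ)`, which is zero
since `λ ∈ ρ(A_B)`. Existence: `w = A_β⁻¹ f` has `Γ w = (0, f)` for `f ∈ Z′`, and subtracting
`v = (A_B − λ)⁻¹ (A_max − λ) w ∈ D(A_B)` makes `w − v` an eigenvector with `Γ (w − v) − (0, f) = −Γ v`.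
-/

theorem LinearPMap.mem_graph_iff_exists_eq {R E F : Type*} [Ring R] [AddCommGroup E] [Module R E]
    [AddCommGroup F] [Module R F] (f : E →ₗ.[R] F) {x : E} {y : F} :
    (x, y) ∈ f.graph ↔ ∃ hx : x ∈ f.domain, f ⟨x, hx⟩ = y := by
  rw [LinearPMap.mem_graph_iff]
  constructor
  · rintro ⟨⟨x, hx⟩, rfl, rfl⟩
    exact ⟨hx, rfl⟩
  · rintro ⟨hx, rfl⟩
    exact ⟨⟨x, hx⟩, rfl, rfl⟩

theorem Submodule.eq_of_sub_mem_of_disjoint_comap_ker {R M N K : Type*} [Ring R]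
    [AddCommGroup M] [Module R M] [AddCommGroup N] [Module R N] [AddCommGroup K] [Module R K]
    {Γ : M →ₗ[R] N} {G : Submodule R N} {T : M →ₗ[R] K}
    (hdisj : Disjoint (G.comap Γ) (LinearMap.ker T)) {c : N} {u₁ u₂ : M}
    (h₁ : Γ u₁ - c ∈ G) (h₂ : Γ u₂ - c ∈ G) (hT₁ : T u₁ = 0) (hT₂ : T u₂ = 0) : u₁ = u₂ := by
  refine sub_eq_zero.1 (Submodule.disjoint_def.1 hdisj _ ?_ ?_)
  · simpa using G.sub_mem h₁ h₂
  · simp [hT₁, hT₂]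

section BoundaryMap

variable {R H : Type*} [CommRing R] [AddCommGroup H] [Module R H] {D : Submodule R H}
  (A : D →ₗ[R] H) (S P : H →ₗ[R] H)

/-- With `S = A_β⁻¹` and `P` the projection onto `Z′`, the components are `Γ₀ = pr_ζ = 1 − S A`
and `Γ₁ = P A`. -/
def boundaryMap : D →ₗ[R] H × H :=
  (D.subtype - S ∘ₗ A).prod (P ∘ₗ A)

@[simp]
theorem boundaryMap_apply (u : D) : boundaryMap A S P u = ((u : H) - S (A u), P (A u)) :=
  rfl

theorem boundaryMap_mem_graph_iff (B : H →ₗ.[R] H) (u : D) :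
    boundaryMap A S P u ∈ B.graph ↔
      ∃ hb : (u : H) - S (A u) ∈ B.domain, P (A u) = B ⟨(u : H) - S (A u), hb⟩ := by
  simp only [boundaryMap_apply, LinearPMap.mem_graph_iff_exists_eq, eq_comm]

theorem boundaryMap_sub_mem_graph_iff (B : H →ₗ.[R] H) (u : D) (f : H) :
    boundaryMap A S P u - (0, f) ∈ B.graph ↔
      ∃ hb : (u : H) - S (A u) ∈ B.domain, P (A u) - B ⟨(u : H) - S (A u), hb⟩ = f := by
  simp only [boundaryMap_apply, Prod.mk_sub_mk, sub_zero, LinearPMap.mem_graph_iff_exists_eq]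
  exact exists_congr fun _ ↦ by rw [eq_sub_iff_add_eq, sub_eq_iff_eq_add, add_comm, eq_comm]

theorem boundaryMap_of_rightInverse {f : H} (hf : S f ∈ D) (hAS : A ⟨S f, hf⟩ = f) :
    boundaryMap A S P ⟨S f, hf⟩ = (0, P f) := by
  simp [hAS]

theorem apply_sub_eq_smul_and_boundaryMap_sub_mem_graph (B : H →ₗ.[R] H) (μ : R) {f : H}
    (hSD : S f ∈ D) (hAS : A ⟨S f, hSD⟩ = f) {v : D} (hv_graph : boundaryMap A S P v ∈ B.graph)
    (hv : A v - μ • (v : H) = f - μ • S f) (hPf : P f = f) :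
    A (⟨S f, hSD⟩ - v) = μ • (S f - v) ∧
      boundaryMap A S P (⟨S f, hSD⟩ - v) - (0, f) ∈ B.graph := by
  constructor
  · rw [map_sub, hAS, sub_eq_iff_eq_add.1 hv]
    module
  · rw [map_sub, boundaryMap_of_rightInverse A S P hSD hAS, hPf, sub_sub_cancel_left]
    exact neg_mem hv_graph

end BoundaryMap

theorem stmt_11_general
    {H : Type*} [NormedAddCommGroup H] [InnerProductSpace ℂ H]
    (D D' Dβ DAB : Submodule ℂ H) (hβD : Dβ ≤ D)
    (A : D →ₗ[ℂ] H) (A' : D' →ₗ[ℂ] H) (μ : ℂ)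
    -- 0 ∈ ρ(A_β)
    (Aβinv : H →L[ℂ] H)
    (h0ran : ∀ f : H, Aβinv f ∈ Dβ)
    (h0right : ∀ f : H, A ⟨Aβinv f, hβD (h0ran f)⟩ = f)
    -- PZ' : orthogonal projection onto Z′ = ker A_max′
    (PZ' : H →L[ℂ] H)
    (hPZ'fix : ∀ z : D', A' z = 0 → PZ' z = (z : H))
    -- B : Z → Z′ closed and densely defined
    (B : H →ₗ.[ℂ] H)
    -- A_B : D(A_B) = {u ∈ D(A_max) : Γ₀u ∈ D(B), Γ₁u = B Γ₀u}
    (hDAB : ∀ u : D, (u : H) ∈ DAB ↔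
      ∃ h : ((u : H) - Aβinv (A u)) ∈ B.domain,
        PZ' (A u) = B ⟨(u : H) - Aβinv (A u), h⟩)
    -- μ ∈ ρ(A_B): bounded resolvent RB of A_B − μ
    (RB : H →L[ℂ] H)
    (hRBmem : ∀ f : H, RB f ∈ DAB)
    (hRBD : ∀ f : H, RB f ∈ D)
    (hRBleft : ∀ u : D, (u : H) ∈ DAB → RB (A u - μ • (u : H)) = (u : H))
    (hRBright : ∀ f : H, A ⟨RB f, hRBD f⟩ - μ • RB f = f) :
    let Z' : Submodule ℂ H := (LinearMap.ker A').map D'.subtype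
    ∀ f ∈ Z',
      -- unique z^λ ∈ Z_λ with Γ₀ z^λ ∈ D(B) and (Γ₁ − BΓ₀) z^λ = f
      (∃! z : H, ∃ hz : z ∈ D, A ⟨z, hz⟩ = μ • z ∧
        ∃ hb : (z - Aβinv (A ⟨z, hz⟩)) ∈ B.domain,
          PZ' (A ⟨z, hz⟩) - B ⟨z - Aβinv (A ⟨z, hz⟩), hb⟩ = f) ∧
      -- explicitly, z^λ = (I − (A_B − λ)⁻¹(A_max − λ)) A_β⁻¹ f, so that
      -- M_B(λ) f = pr_ζ z^λ, i.e. M_B(λ) = pr_ζ (I − (A_B−λ)⁻¹(A_max−λ)) A_β⁻¹ i_{Z′→H}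
      (∃ hz : (Aβinv f - RB (f - μ • Aβinv f)) ∈ D,
        A ⟨Aβinv f - RB (f - μ • Aβinv f), hz⟩ = μ • (Aβinv f - RB (f - μ • Aβinv f)) ∧
        ∃ hb : ((Aβinv f - RB (f - μ • Aβinv f)) -
            Aβinv (A ⟨Aβinv f - RB (f - μ • Aβinv f), hz⟩)) ∈ B.domain,
          PZ' (A ⟨Aβinv f - RB (f - μ • Aβinv f), hz⟩) -
            B ⟨(Aβinv f - RB (f - μ • Aβinv f)) -
                Aβinv (A ⟨Aβinv f - RB (f - μ • Aβinv f), hz⟩), hb⟩ = f) := by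
  intro Z' f hf
  set Γ := boundaryMap A (Aβinv : H →ₗ[ℂ] H) PZ'
  have hPf : PZ' f = f := by
    obtain ⟨f', hf', rfl⟩ := hf
    exact hPZ'fix f' hf'
  have hDAB_graph (u : D) : (u : H) ∈ DAB ↔ Γ u ∈ B.graph :=
    (hDAB u).trans (boundaryMap_mem_graph_iff A _ _ B u).symm
  have hdisj : Disjoint (B.graph.comap Γ) (LinearMap.ker (A - μ • D.subtype)) := by
    refine Submodule.disjoint_def.2 fun u hu hker ↦ Subtype.ext ?_
    have hAu : A u - μ • (u : H) = 0 := hker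
    simpa [hAu] using (hRBleft u ((hDAB_graph u).2 hu)).symm
  have hker {u : D} (hu : A u = μ • (u : H)) : (A - μ • D.subtype) u = 0 := sub_eq_zero.2 hu
  obtain ⟨hAz, hΓz⟩ := apply_sub_eq_smul_and_boundaryMap_sub_mem_graph A Aβinv PZ' B μ
    (hβD (h0ran f)) (h0right f) ((hDAB_graph ⟨_, hRBD _⟩).1 (hRBmem _)) (hRBright _) hPf
  set z : D := ⟨Aβinv f, hβD (h0ran f)⟩ - ⟨RB (f - μ • Aβinv f), hRBD _⟩
  have hsol := (boundaryMap_sub_mem_graph_iff A _ _ B z f).1 hΓz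
  refine ⟨⟨z, ⟨z.2, hAz, hsol⟩, ?_⟩, z.2, hAz, hsol⟩
  rintro y ⟨hy, hAy, hby⟩
  refine congrArg Subtype.val (Submodule.eq_of_sub_mem_of_disjoint_comap_ker hdisj
    ((boundaryMap_sub_mem_graph_iff A _ _ B ⟨y, hy⟩ f).2 hby) hΓz (hker hAy) (hker hAz))

/-- **Lemma 2.8.** For `λ ∈ ρ(A_B)`, the `M`-function is well defined as a
map `M_B(λ) : Z′ → Z` by `M_B(λ)(Γ₁ − BΓ₀)u = Γ₀ u` for all `u ∈ Z_λ` with `Γ₀ u ∈ D(B)`;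
explicitly `M_B(λ) = pr_ζ (I − (A_B − λ)⁻¹(A_max − λ)) A_β⁻¹ i_{Z′→H}`.  In particular, for
each `f ∈ Z′` there is a unique `z^λ ∈ Z_λ` with `Γ₀ z^λ ∈ D(B)` and `(Γ₁ − BΓ₀) z^λ = f`. -/
theorem stmt_11
    {H : Type*} [NormedAddCommGroup H] [InnerProductSpace ℂ H] [CompleteSpace H]
    (D D' Dβ DAB : Submodule ℂ H) (hβD : Dβ ≤ D) (hABD : DAB ≤ D)
    (A : D →ₗ[ℂ] H) (A' : D' →ₗ[ℂ] H) (μ : ℂ)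
    -- 0 ∈ ρ(A_β)
    (Aβinv : H →L[ℂ] H)
    (h0ran : ∀ f : H, Aβinv f ∈ Dβ)
    (h0left : ∀ u : D, (u : H) ∈ Dβ → Aβinv (A u) = (u : H))
    (h0right : ∀ f : H, A ⟨Aβinv f, hβD (h0ran f)⟩ = f)
    -- PZ' : orthogonal projection onto Z′ = ker A_max′
    (PZ' : H →L[ℂ] H)
    (hPZ'mem : ∀ x : H, ∃ h : PZ' x ∈ D', A' ⟨PZ' x, h⟩ = 0)
    (hPZ'fix : ∀ z : D', A' z = 0 → PZ' z = (z : H))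
    (hPZ'orth : ∀ x : H, ∀ z : D', A' z = 0 → ⟪x - PZ' x, (z : H)⟫_ℂ = 0)
    -- B : Z → Z′ closed and densely defined
    (B : H →ₗ.[ℂ] H)
    (hBdom : B.domain ≤ (LinearMap.ker A).map D.subtype)
    (hBran : ∀ x : B.domain, B x ∈ (LinearMap.ker A').map D'.subtype)
    -- A_B : D(A_B) = {u ∈ D(A_max) : Γ₀u ∈ D(B), Γ₁u = B Γ₀u}
    (hDAB : ∀ u : D, (u : H) ∈ DAB ↔
      ∃ h : ((u : H) - Aβinv (A u)) ∈ B.domain,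
        PZ' (A u) = B ⟨(u : H) - Aβinv (A u), h⟩)
    -- μ ∈ ρ(A_B): bounded resolvent RB of A_B − μ
    (RB : H →L[ℂ] H)
    (hRBmem : ∀ f : H, RB f ∈ DAB)
    (hRBD : ∀ f : H, RB f ∈ D)
    (hRBleft : ∀ u : D, (u : H) ∈ DAB → RB (A u - μ • (u : H)) = (u : H))
    (hRBright : ∀ f : H, A ⟨RB f, hRBD f⟩ - μ • RB f = f) :
    let Z' : Submodule ℂ H := (LinearMap.ker A').map D'.subtype
    ∀ f ∈ Z',
      -- unique z^λ ∈ Z_λ with Γ₀ z^λ ∈ D(B) and (Γ₁ − BΓ₀) z^λ = f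
      (∃! z : H, ∃ hz : z ∈ D, A ⟨z, hz⟩ = μ • z ∧
        ∃ hb : (z - Aβinv (A ⟨z, hz⟩)) ∈ B.domain,
          PZ' (A ⟨z, hz⟩) - B ⟨z - Aβinv (A ⟨z, hz⟩), hb⟩ = f) ∧
      -- explicitly, z^λ = (I − (A_B − λ)⁻¹(A_max − λ)) A_β⁻¹ f, so that
      -- M_B(λ) f = pr_ζ z^λ, i.e. M_B(λ) = pr_ζ (I − (A_B−λ)⁻¹(A_max−λ)) A_β⁻¹ i_{Z′→H}
      (∃ hz : (Aβinv f - RB (f - μ • Aβinv f)) ∈ D,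
        A ⟨Aβinv f - RB (f - μ • Aβinv f), hz⟩ = μ • (Aβinv f - RB (f - μ • Aβinv f)) ∧
        ∃ hb : ((Aβinv f - RB (f - μ • Aβinv f)) -
            Aβinv (A ⟨Aβinv f - RB (f - μ • Aβinv f), hz⟩)) ∈ B.domain,
          PZ' (A ⟨Aβinv f - RB (f - μ • Aβinv f), hz⟩) -
            B ⟨(Aβinv f - RB (f - μ • Aβinv f)) -
                Aβinv (A ⟨Aβinv f - RB (f - μ • Aβinv f), hz⟩), hb⟩ = f) :=
  stmt_11_general D D' Dβ DAB hβD A A' μ Aβinv h0ran h0right PZ' hPZ'fix B hDAB RB hRBmem hRBD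
    hRBleft hRBright
end

section
/- Let à be an arbitrary closed extension A_min ⊂ à ⊂ A_max corresponding to T : V → W. Then for each λ ∈ ρ(Ã), the formula M_Ã(λ) = pr_ζ (I − (à − λ)^{-1}(A_max − λ)) A_β^{-1} i_{W→H} defines a bounded operator W → V, depending holomorphically on λ ∈ ρ(Ã), which satisfies M_Ã(λ)((A z^λ)_W − T pr_ζ z^λ) = pr_ζ z^λ for all z^λ ∈ Z_λ with pr_ζ z^λ ∈ D(T). Moreover, for λ ∈ ρ(Ã) ∩ ρ(A_β), −M_Ã(λ) is the inverse of T + G^λ_{V,W} : D(T) → W. -/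
/-!
For `f ∈ W`, `x = (I - (Ã - ν)⁻¹(A_max - ν)) A_β⁻¹ f` is the component of `A_β⁻¹ f` in `Z_ν`
for the decomposition `D(A_max) = D(Ã) ∔ Z_ν`, and `M(ν) f = pr_ζ x`. Since `pr_ζ` vanishes on
`D(A_β)`, `-M(ν) f = pr_ζ (A_β⁻¹ f - x)` with `A_β⁻¹ f - x ∈ D(Ã)`, so `-M(ν) f ∈ D(T)` and
`T (-M(ν) f) = (A_max (A_β⁻¹ f - x))_W = f - ν x_W`. Conversely, for `z ∈ Z_ν` and
`f = (A z)_W - T pr_ζ z`, the boundary condition defining `D(Ã)` says precisely that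
`A_β⁻¹ f - z ∈ D(Ã)`, which forces `x = z`: this is (2.36).

For `ν ∈ ρ(A_β)`, `y ↦ y + ν (A_β - ν)⁻¹ y` inverts `pr_ζ` on `Z_ν`, so that
`G^ν_{V,W} (pr_ζ z) = -(A z)_W` for `z ∈ Z_ν`, as `W ⊂ Z'`. With this, (2.36) and the formula for
`T (-M(ν) f)` are the two inverse identities. Holomorphy follows from the resolvent identity once
`M(ν)` is written as `(I - ν A_β⁻¹)(A_β⁻¹ - (Ã - ν)⁻¹(I - ν A_β⁻¹))`.
-/

open scoped InnerProductSpace Topology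

namespace AdjointPair

theorem differentiableOn_of_resolvent_identity {E : Type*} [NormedAddCommGroup E]
    [NormedSpace ℂ E] [CompleteSpace E] {R : ℂ → E →L[ℂ] E} {U : Set ℂ}
    (hR : ∀ μ ∈ U, ∀ ν ∈ U, R ν = R μ + (ν - μ) • (R μ * R ν)) :
    DifferentiableOn ℂ R U := by
  intro μ hμ
  -- near `μ` the factor `1 - (ν - μ) R μ` is inverted by a Neumann series
  have hnear : ∀ᶠ ν in 𝓝[U] μ, R ν = Ring.inverse (1 - (ν - μ) • R μ) * R μ := by
    have hsmall : ∀ᶠ ν in 𝓝 μ, ‖(ν - μ) • R μ‖ < 1 := by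
      have hcont : ContinuousAt (fun ν : ℂ => ‖(ν - μ) • R μ‖) μ := by fun_prop
      exact hcont (Iio_mem_nhds (by simp))
    filter_upwards [nhdsWithin_le_nhds hsmall, self_mem_nhdsWithin] with ν hν hνU
    have hunit : IsUnit (1 - (ν - μ) • R μ) := (Units.oneSub _ hν).isUnit
    rw [eq_comm, Ring.inverse_mul_eq_iff_eq_mul _ _ _ hunit, sub_mul, one_mul, smul_mul_assoc]
    exact eq_sub_of_add_eq (hR μ hμ ν hνU).symm
  have hdiff : DifferentiableAt ℂ (fun ν => Ring.inverse (1 - (ν - μ) • R μ) * R μ) μ :=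
    (DifferentiableAt.inverse (by fun_prop) (by simp)).mul (differentiableAt_const _)
  exact hdiff.differentiableWithinAt.congr_of_eventuallyEq hnear (by simp)

section Projection

variable {H : Type*} [NormedAddCommGroup H] [InnerProductSpace ℂ H] {W : Submodule ℂ H}
  {P : H →L[ℂ] H}

theorem apply_eq_apply_of_sub_mem_orthogonal (hmem : ∀ x, P x ∈ W)
    (horth : ∀ x, ∀ w ∈ W, ⟪x - P x, w⟫_ℂ = 0) {ξ η : H} (h : ξ - η ∈ Wᗮ) : P ξ = P η := by
  have h₁ := horth (ξ - η) _ (hmem (ξ - η))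
  rw [inner_sub_left, (Submodule.mem_orthogonal' W _).mp h _ (hmem _), zero_sub, neg_eq_zero,
    inner_self_eq_zero, map_sub, sub_eq_zero] at h₁
  exact h₁

theorem apply_apply_eq_of_le_ker {D' : Submodule ℂ H} {A' : D' →ₗ[ℂ] H} {Q : H →L[ℂ] H}
    (hmem : ∀ x, P x ∈ W) (horth : ∀ x, ∀ w ∈ W, ⟪x - P x, w⟫_ℂ = 0)
    (hQorth : ∀ x : H, ∀ z : D', A' z = 0 → ⟪x - Q x, (z : H)⟫_ℂ = 0)
    (hW : W ≤ (LinearMap.ker A').map D'.subtype) (ξ : H) : P (Q ξ) = P ξ := by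
  refine apply_eq_apply_of_sub_mem_orthogonal hmem horth
    ((Submodule.mem_orthogonal' W _).mpr fun w hw => ?_)
  obtain ⟨z, hz, rfl⟩ := hW hw
  rw [← neg_sub, inner_neg_left, neg_eq_zero]
  exact hQorth ξ z hz

end Projection

variable {H : Type*} [NormedAddCommGroup H] [NormedSpace ℂ H] {D Dβ DAt W : Submodule ℂ H}
  {A : D →ₗ[ℂ] H} {Aβinv PW PZ' R Rβ : H →L[ℂ] H} {hAβD : ∀ f, Aβinv f ∈ D}
  {hRD : ∀ f, R f ∈ D} {T : H →ₗ.[ℂ] H} {ν : ℂ}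

section EigenComponent

/-- The component of `u` in `ker (A - ν)` for the decomposition `D = D₀ ∔ ker (A - ν)`, where
`R = (A|D₀ - ν)⁻¹`. -/
def eigenComponent (A : D →ₗ[ℂ] H) (ν : ℂ) (R : H →L[ℂ] H) (hRD : ∀ f, R f ∈ D) (u : D) : D :=
  u - ⟨R (A u - ν • (u : H)), hRD _⟩

theorem coe_eigenComponent (u : D) :
    (eigenComponent A ν R hRD u : H) = u - R (A u - ν • (u : H)) := rfl

theorem apply_eigenComponent (hright : ∀ f, A ⟨R f, hRD f⟩ - ν • R f = f) (u : D) :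
    A (eigenComponent A ν R hRD u) = ν • (eigenComponent A ν R hRD u : H) := by
  rw [coe_eigenComponent, eigenComponent, map_sub, eq_add_of_sub_eq (hright _), smul_sub]
  abel

theorem sub_eigenComponent_mem {D₀ : Submodule ℂ H} (hRD₀ : ∀ f, R f ∈ D₀) (u : D) :
    (u : H) - eigenComponent A ν R hRD u ∈ D₀ := by
  rw [coe_eigenComponent, sub_sub_cancel]
  exact hRD₀ _

theorem eigenComponent_eq {D₀ : Submodule ℂ H}
    (hleft : ∀ u : D, (u : H) ∈ D₀ → R (A u - ν • (u : H)) = u) {u z : D}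
    (hz : A z = ν • (z : H)) (huz : (u : H) - z ∈ D₀) : eigenComponent A ν R hRD u = z := by
  have hAν : A (u - z) - ν • ((u - z : D) : H) = A u - ν • (u : H) := by
    rw [map_sub, hz, Submodule.coe_sub, smul_sub]
    abel
  have h := hleft (u - z) huz
  rw [hAν, Submodule.coe_sub] at h
  exact Subtype.ext (by rw [coe_eigenComponent, h, sub_sub_cancel])

theorem resolvent_eq_add_smul_mul {D₀ : Submodule ℂ H} {μ : ℂ} {R₀ : H →L[ℂ] H}
    (hleft₀ : ∀ u : D, (u : H) ∈ D₀ → R₀ (A u - μ • (u : H)) = u) (hRD₀ : ∀ f, R f ∈ D₀)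
    (hright : ∀ f, A ⟨R f, hRD f⟩ - ν • R f = f) :
    R = R₀ + (ν - μ) • (R₀ * R) := by
  ext f
  have h := hleft₀ ⟨R f, hRD f⟩ (hRD₀ f)
  rw [eq_add_of_sub_eq (hright f), add_sub_assoc, ← sub_smul, map_add, map_smul] at h
  simpa using h.symm

end EigenComponent

section PrZeta

/-- `pr_ζ = I - A_β⁻¹ A_max`. -/
def prZeta (A : D →ₗ[ℂ] H) (Aβinv : H →L[ℂ] H) : D →ₗ[ℂ] H :=
  D.subtype - (Aβinv : H →ₗ[ℂ] H) ∘ₗ A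

theorem prZeta_apply (u : D) : prZeta A Aβinv u = (u : H) - Aβinv (A u) := rfl

theorem prZeta_eq_zero_of_mem (h0left : ∀ u : D, (u : H) ∈ Dβ → Aβinv (A u) = u) {u : D}
    (hu : (u : H) ∈ Dβ) : prZeta A Aβinv u = 0 := by
  rw [prZeta_apply, h0left u hu, sub_self]

theorem prZeta_of_apply_eq_smul {z : D} (hz : A z = ν • (z : H)) :
    prZeta A Aβinv z = z - ν • Aβinv z := by
  rw [prZeta_apply, hz, map_smul]

theorem exists_apply_eq_smul_prZeta_eq (hβD : Dβ ≤ D) (hRβD : ∀ f, Rβ f ∈ Dβ)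
    (hβright : ∀ f, A ⟨Rβ f, hβD (hRβD f)⟩ - ν • Rβ f = f)
    (h0left : ∀ u : D, (u : H) ∈ Dβ → Aβinv (A u) = u) (u : D) :
    ∃ e : D, A e = ν • (e : H) ∧ prZeta A Aβinv e = prZeta A Aβinv u := by
  refine ⟨eigenComponent A ν Rβ (fun f => hβD (hRβD f)) u, apply_eigenComponent hβright u, ?_⟩
  rw [eq_comm, ← sub_eq_zero, ← map_sub]
  exact prZeta_eq_zero_of_mem h0left (sub_eigenComponent_mem hRβD u)

theorem prZeta_add_smul_resolvent (h0ran : ∀ f, Aβinv f ∈ Dβ)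
    (h0right : ∀ f, A ⟨Aβinv f, hAβD f⟩ = f)
    (hβleft : ∀ u : D, (u : H) ∈ Dβ → Rβ (A u - ν • (u : H)) = u) {z : D}
    (hz : A z = ν • (z : H)) :
    prZeta A Aβinv z + ν • Rβ (prZeta A Aβinv z) = z := by
  have h : Rβ (z - ν • Aβinv z) = Aβinv z := by
    have h := hβleft ⟨Aβinv z, hAβD z⟩ (h0ran z)
    rwa [h0right] at h
  rw [prZeta_of_apply_eq_smul hz, h, sub_add_cancel]

/-- `G^ν_{V,W}`, with `Rβ = (A_β - ν)⁻¹`, `PZ' = proj_{Z'}` and `PW = pr_W`. -/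
def gOperator (PW PZ' Rβ : H →L[ℂ] H) (ν : ℂ) (y : H) : H :=
  PW (-(ν • PZ' (y + ν • Rβ y)))

theorem gOperator_prZeta (h0ran : ∀ f, Aβinv f ∈ Dβ) (h0right : ∀ f, A ⟨Aβinv f, hAβD f⟩ = f)
    (hβleft : ∀ u : D, (u : H) ∈ Dβ → Rβ (A u - ν • (u : H)) = u)
    (hPWPZ' : ∀ ξ, PW (PZ' ξ) = PW ξ) {z : D} (hz : A z = ν • (z : H)) :
    gOperator PW PZ' Rβ ν (prZeta A Aβinv z) = -PW (A z) := by
  rw [gOperator, prZeta_add_smul_resolvent h0ran h0right hβleft hz, hz, map_neg, map_smul,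
    hPWPZ', map_smul]

end PrZeta

section WeylFunction

/-- `M_Ã(ν)`, with `R = (Ã - ν)⁻¹`. -/
def weylFunction (A : D →ₗ[ℂ] H) (Aβinv : H →L[ℂ] H) (hAβD : ∀ f, Aβinv f ∈ D) (ν : ℂ)
    (R : H →L[ℂ] H) (hRD : ∀ f, R f ∈ D) (f : H) : H :=
  prZeta A Aβinv (eigenComponent A ν R hRD ⟨Aβinv f, hAβD f⟩)

theorem weylFunction_eq_apply (h0right : ∀ f, A ⟨Aβinv f, hAβD f⟩ = f)
    (hright : ∀ f, A ⟨R f, hRD f⟩ - ν • R f = f) (f : H) :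
    weylFunction A Aβinv hAβD ν R hRD f
      = ((1 - ν • Aβinv) * (Aβinv - R * (1 - ν • Aβinv))) f := by
  rw [weylFunction, prZeta_of_apply_eq_smul (apply_eigenComponent hright _), coe_eigenComponent,
    h0right]
  simp

theorem weylFunction_neg (h0right : ∀ f, A ⟨Aβinv f, hAβD f⟩ = f)
    (hright : ∀ f, A ⟨R f, hRD f⟩ - ν • R f = f) (f : H) :
    weylFunction A Aβinv hAβD ν R hRD (-f) = -weylFunction A Aβinv hAβD ν R hRD f := by
  rw [weylFunction_eq_apply h0right hright, weylFunction_eq_apply h0right hright, map_neg]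

theorem neg_weylFunction (h0ran : ∀ f, Aβinv f ∈ Dβ)
    (h0left : ∀ u : D, (u : H) ∈ Dβ → Aβinv (A u) = u) (f : H) :
    -weylFunction A Aβinv hAβD ν R hRD f
      = prZeta A Aβinv (⟨Aβinv f, hAβD f⟩ - eigenComponent A ν R hRD ⟨Aβinv f, hAβD f⟩) := by
  rw [map_sub, prZeta_eq_zero_of_mem h0left (h0ran f), zero_sub, weylFunction]

theorem differentiableOn_weylFunction [CompleteSpace H] {R : ℂ → H →L[ℂ] H} {U : Set ℂ}
    (hRD : ∀ ν f, R ν f ∈ D) (hRAt : ∀ ν ∈ U, ∀ f, R ν f ∈ DAt)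
    (hleft : ∀ ν ∈ U, ∀ u : D, (u : H) ∈ DAt → R ν (A u - ν • (u : H)) = u)
    (hright : ∀ ν ∈ U, ∀ f, A ⟨R ν f, hRD ν f⟩ - ν • R ν f = f)
    (h0right : ∀ f, A ⟨Aβinv f, hAβD f⟩ = f) (f : H) :
    DifferentiableOn ℂ (fun ν => weylFunction A Aβinv hAβD ν (R ν) (hRD ν) f) U := by
  have hR : DifferentiableOn ℂ R U := differentiableOn_of_resolvent_identity fun μ hμ ν hν =>
    resolvent_eq_add_smul_mul (hleft μ hμ) (hRAt ν hν) (hright ν hν)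
  have hM : DifferentiableOn ℂ
      (fun ν => ((1 - ν • Aβinv) * (Aβinv - R ν * (1 - ν • Aβinv))) f) U := by
    fun_prop
  exact hM.congr fun ν hν => weylFunction_eq_apply h0right (hright ν hν) f

theorem weylFunction_mem_domain (h0ran : ∀ f, Aβinv f ∈ Dβ)
    (h0left : ∀ u : D, (u : H) ∈ Dβ → Aβinv (A u) = u) (hRDAt : ∀ f, R f ∈ DAt)
    (hdom : ∀ u : D, (u : H) ∈ DAt → prZeta A Aβinv u ∈ T.domain) (f : H) :
    weylFunction A Aβinv hAβD ν R hRD f ∈ T.domain := by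
  rw [← neg_mem_iff, neg_weylFunction h0ran h0left]
  exact hdom _ (sub_eigenComponent_mem hRDAt _)

theorem weylFunction_boundary (h0ran : ∀ f, Aβinv f ∈ Dβ)
    (h0left : ∀ u : D, (u : H) ∈ Dβ → Aβinv (A u) = u) (h0right : ∀ f, A ⟨Aβinv f, hAβD f⟩ = f)
    (hleft : ∀ u : D, (u : H) ∈ DAt → R (A u - ν • (u : H)) = u)
    (hPWmem : ∀ x, PW x ∈ W) (hPWfix : ∀ w ∈ W, PW w = w) (hTran : ∀ y : T.domain, T y ∈ W)
    (hmemAt : ∀ u : D, (∃ hx : prZeta A Aβinv u ∈ T.domain,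
      PW (A u) = T ⟨prZeta A Aβinv u, hx⟩) → (u : H) ∈ DAt)
    {z : D} (hz : A z = ν • (z : H)) (hb : prZeta A Aβinv z ∈ T.domain) :
    weylFunction A Aβinv hAβD ν R hRD (PW (A z) - T ⟨prZeta A Aβinv z, hb⟩)
      = prZeta A Aβinv z := by
  set f := PW (A z) - T ⟨prZeta A Aβinv z, hb⟩ with hf
  set v : D := ⟨Aβinv f, hAβD f⟩
  have hpr : prZeta A Aβinv (v - z) = -prZeta A Aβinv z := by
    rw [map_sub, prZeta_eq_zero_of_mem h0left (h0ran f), zero_sub]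
  have hdom : prZeta A Aβinv (v - z) ∈ T.domain := hpr ▸ neg_mem hb
  have hAt : (v : H) - z ∈ DAt := by
    refine hmemAt (v - z) ⟨hdom, ?_⟩
    have hT : T ⟨_, hdom⟩ = -T ⟨_, hb⟩ := by
      rw [← T.map_neg]
      exact congrArg T (Subtype.ext hpr)
    rw [hT, map_sub, h0right, map_sub, hPWfix f (W.sub_mem (hPWmem _) (hTran _)), hf]
    abel
  rw [weylFunction, eigenComponent_eq hleft hz hAt]

theorem weylFunction_T_add_gOperator (h0ran : ∀ f, Aβinv f ∈ Dβ)
    (h0left : ∀ u : D, (u : H) ∈ Dβ → Aβinv (A u) = u) (h0right : ∀ f, A ⟨Aβinv f, hAβD f⟩ = f)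
    (hright : ∀ f, A ⟨R f, hRD f⟩ - ν • R f = f) (hβD : Dβ ≤ D) (hRβD : ∀ f, Rβ f ∈ Dβ)
    (hβleft : ∀ u : D, (u : H) ∈ Dβ → Rβ (A u - ν • (u : H)) = u)
    (hβright : ∀ f, A ⟨Rβ f, hβD (hRβD f)⟩ - ν • Rβ f = f)
    (hPWPZ' : ∀ ξ, PW (PZ' ξ) = PW ξ) (hdom : ∀ y ∈ T.domain, ∃ u : D, prZeta A Aβinv u = y)
    (hboundary : ∀ z : D, A z = ν • (z : H) → ∀ hb : prZeta A Aβinv z ∈ T.domain,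
      weylFunction A Aβinv hAβD ν R hRD (PW (A z) - T ⟨prZeta A Aβinv z, hb⟩) = prZeta A Aβinv z)
    (y : T.domain) :
    weylFunction A Aβinv hAβD ν R hRD (T y + gOperator PW PZ' Rβ ν y) = -y := by
  obtain ⟨u, hu⟩ := hdom y y.2
  obtain ⟨e, he, hey⟩ := exists_apply_eq_smul_prZeta_eq hβD hRβD hβright h0left u
  rw [hu] at hey
  have hb : prZeta A Aβinv e ∈ T.domain := hey ▸ y.2
  have hTe : T ⟨prZeta A Aβinv e, hb⟩ = T y := congrArg T (Subtype.ext hey)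
  rw [← hey, gOperator_prZeta h0ran h0right hβleft hPWPZ' he, ← sub_eq_add_neg, ← neg_sub, ← hTe,
    weylFunction_neg h0right hright, hboundary e he hb]

theorem T_neg_weylFunction_add_gOperator (h0ran : ∀ f, Aβinv f ∈ Dβ)
    (h0left : ∀ u : D, (u : H) ∈ Dβ → Aβinv (A u) = u) (h0right : ∀ f, A ⟨Aβinv f, hAβD f⟩ = f)
    (hright : ∀ f, A ⟨R f, hRD f⟩ - ν • R f = f) (hRDAt : ∀ f, R f ∈ DAt)
    (hβleft : ∀ u : D, (u : H) ∈ Dβ → Rβ (A u - ν • (u : H)) = u)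
    (hPWPZ' : ∀ ξ, PW (PZ' ξ) = PW ξ) (hPWfix : ∀ w ∈ W, PW w = w)
    (hval : ∀ u : D, (u : H) ∈ DAt →
      ∃ hx : prZeta A Aβinv u ∈ T.domain, PW (A u) = T ⟨prZeta A Aβinv u, hx⟩)
    {f : H} (hf : f ∈ W) :
    ∃ hb : -weylFunction A Aβinv hAβD ν R hRD f ∈ T.domain,
      T ⟨-weylFunction A Aβinv hAβD ν R hRD f, hb⟩
        + gOperator PW PZ' Rβ ν (-weylFunction A Aβinv hAβD ν R hRD f) = f := by
  set x := eigenComponent A ν R hRD ⟨Aβinv f, hAβD f⟩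
  have hx : A (-x) = ν • ((-x : D) : H) := by
    rw [map_neg, apply_eigenComponent hright, Submodule.coe_neg, smul_neg]
  have hr := neg_weylFunction (ν := ν) (hRD := hRD) (hAβD := hAβD) h0ran h0left f
  obtain ⟨hdom, hval⟩ := hval (⟨Aβinv f, hAβD f⟩ - x) (sub_eigenComponent_mem hRDAt _)
  refine ⟨hr ▸ hdom, ?_⟩
  have hT : T ⟨-weylFunction A Aβinv hAβD ν R hRD f, hr ▸ hdom⟩ = T ⟨_, hdom⟩ :=
    congrArg T (Subtype.ext hr)
  have hprx : prZeta A Aβinv (-x) = -weylFunction A Aβinv hAβD ν R hRD f := map_neg _ _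
  rw [hT, ← hval, ← hprx, gOperator_prZeta h0ran h0right hβleft hPWPZ' hx, map_sub, h0right,
    map_sub, hPWfix f hf, map_neg, map_neg, neg_neg, sub_add_cancel]

end WeylFunction

end AdjointPair

open AdjointPair

theorem stmt_15_general
    {H : Type*} [NormedAddCommGroup H] [InnerProductSpace ℂ H] [CompleteSpace H]
    (D D' Dβ DAt : Submodule ℂ H) (hβD : Dβ ≤ D)
    (A : D →ₗ[ℂ] H) (A' : D' →ₗ[ℂ] H)
    -- 0 ∈ ρ(A_β)
    (Aβinv : H →L[ℂ] H)
    (h0ran : ∀ f : H, Aβinv f ∈ Dβ)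
    (h0left : ∀ u : D, (u : H) ∈ Dβ → Aβinv (A u) = (u : H))
    (h0right : ∀ f : H, A ⟨Aβinv f, hβD (h0ran f)⟩ = f)
    -- PZ' : orthogonal projection onto Z′ = ker A_max′
    (PZ' : H →L[ℂ] H)
    (hPZ'orth : ∀ x : H, ∀ z : D', A' z = 0 → ⟪x - PZ' x, (z : H)⟫_ℂ = 0)
    -- V ⊂ Z and W ⊂ Z′ closed subspaces, PW the orthogonal projection onto W
    (V W : Submodule ℂ H)
    (hWZ' : W ≤ (LinearMap.ker A').map D'.subtype)
    (PW : H →L[ℂ] H)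
    (hPWmem : ∀ x : H, PW x ∈ W)
    (hPWfix : ∀ w ∈ W, PW w = w)
    (hPWorth : ∀ x : H, ∀ w ∈ W, ⟪x - PW x, w⟫_ℂ = 0)
    -- T : V → W, the operator associated with Ã by Theorem 2.1
    (T : H →ₗ.[ℂ] H)
    (hTdomV : T.domain ≤ V)
    (hTran : ∀ x : T.domain, T x ∈ W)
    (hTdom : ∀ x : H, x ∈ T.domain ↔
      ∃ u : D, (u : H) ∈ DAt ∧ (u : H) - Aβinv (A u) = x)
    (hchar : ∀ u : D, (u : H) ∈ DAt ↔
      ∃ hx : ((u : H) - Aβinv (A u)) ∈ T.domain,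
        PW (A u) = T ⟨(u : H) - Aβinv (A u), hx⟩)
    -- U ⊆ ρ(Ã): open set with bounded resolvent family R ν = (Ã − ν)⁻¹
    (U : Set ℂ)
    (R : ℂ → H →L[ℂ] H)
    (hRD : ∀ (ν : ℂ) (f : H), R ν f ∈ D)
    (hRAt : ∀ ν ∈ U, ∀ f : H, R ν f ∈ DAt)
    (hRleft : ∀ ν ∈ U, ∀ u : D, (u : H) ∈ DAt → R ν (A u - ν • (u : H)) = (u : H))
    (hRright : ∀ ν ∈ U, ∀ f : H, A ⟨R ν f, hRD ν f⟩ - ν • R ν f = f)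
    -- Uβ ⊆ ρ(A_β): set with bounded resolvent family Rβ ν = (A_β − ν)⁻¹
    (Uβ : Set ℂ)
    (Rβ : ℂ → H →L[ℂ] H)
    (hRβD : ∀ (ν : ℂ) (f : H), Rβ ν f ∈ Dβ)
    (hRβleft : ∀ ν ∈ Uβ, ∀ u : D, (u : H) ∈ Dβ → Rβ ν (A u - ν • (u : H)) = (u : H))
    (hRβright : ∀ ν ∈ Uβ, ∀ f : H,
      A ⟨Rβ ν f, hβD (hRβD ν f)⟩ - ν • Rβ ν f = f) :
    -- M_Ã(ν) f = pr_ζ ((I − (Ã − ν)⁻¹(A_max − ν)) A_β⁻¹ f), for f ∈ W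
    let v : H → D := fun f => ⟨Aβinv f, hβD (h0ran f)⟩
    let x : ℂ → H → D := fun ν f =>
      v f - ⟨R ν (A (v f) - ν • ((v f : D) : H)), hRD ν (A (v f) - ν • ((v f : D) : H))⟩
    let M : ℂ → H → H := fun ν f => ((x ν f : D) : H) - Aβinv (A (x ν f))
    -- M_Ã(ν) is a bounded operator from W to V
    (∀ ν ∈ U, ∀ f ∈ W, M ν f ∈ V) ∧
    (∀ ν ∈ U, Continuous fun f : W => M ν (f : H)) ∧
    -- holomorphic dependence on ν ∈ ρ(Ã)
    (∀ f ∈ W, DifferentiableOn ℂ (fun ν => M ν f) U) ∧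
    -- the defining relation (2.36): M_Ã(ν)((A z)_W − T pr_ζ z) = pr_ζ z for z ∈ Z_ν
    (∀ ν ∈ U, ∀ z : D, A z = ν • (z : H) →
      ∀ hb : ((z : H) - Aβinv (A z)) ∈ T.domain,
        M ν (PW (A z) - T ⟨(z : H) - Aβinv (A z), hb⟩) = (z : H) - Aβinv (A z)) ∧
    -- for ν ∈ ρ(Ã) ∩ ρ(A_β), −M_Ã(ν) is the inverse of T + G^ν_{V,W} : D(T) → W
    (∀ ν ∈ U ∩ Uβ,
      (∀ y : T.domain,
        M ν (T y + PW (-(ν • PZ' ((y : H) + ν • Rβ ν (y : H))))) = -((y : H))) ∧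
      (∀ f ∈ W, ∃ hb : (-(M ν f)) ∈ T.domain,
        T ⟨-(M ν f), hb⟩ + PW (-(ν • PZ' ((-(M ν f)) + ν • Rβ ν (-(M ν f))))) = f)) := by
  intro v x M
  have hboundary : ∀ ν ∈ U, ∀ z : D, A z = ν • (z : H) →
      ∀ hb : prZeta A Aβinv z ∈ T.domain,
        M ν (PW (A z) - T ⟨prZeta A Aβinv z, hb⟩) = prZeta A Aβinv z := fun ν hν z hz hb =>
    weylFunction_boundary (hRD := hRD ν) h0ran h0left h0right (hRleft ν hν) hPWmem hPWfix
      hTran (fun u => (hchar u).mpr) hz hb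
  have hPWPZ' := apply_apply_eq_of_le_ker hPWmem hPWorth hPZ'orth hWZ'
  refine ⟨fun ν hν f _ => ?_, fun ν hν => ?_, fun f _ => ?_, hboundary,
    fun ν ⟨hνU, hνβ⟩ => ⟨?_, ?_⟩⟩
  · exact hTdomV (weylFunction_mem_domain (hAβD := fun f => hβD (h0ran f)) (hRD := hRD ν)
      h0ran h0left (hRAt ν hν) (fun u hu => ((hchar u).mp hu).1) f)
  · exact ((ContinuousLinearMap.continuous _).comp continuous_subtype_val).congr fun f =>
      (weylFunction_eq_apply h0right (hRright ν hν) f).symm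
  · exact differentiableOn_weylFunction hRD hRAt hRleft hRright h0right f
  · exact weylFunction_T_add_gOperator (hRD := hRD ν) h0ran h0left h0right (hRright ν hνU) hβD
      (hRβD ν) (hRβleft ν hνβ) (hRβright ν hνβ) hPWPZ'
      (fun y hy => let ⟨u, _, hu⟩ := (hTdom y).mp hy; ⟨u, hu⟩) (hboundary ν hνU)
  · exact fun f hf => T_neg_weylFunction_add_gOperator (hRD := hRD ν) h0ran h0left h0right
      (hRright ν hνU) (hRAt ν hνU) (hRβleft ν hνβ) hPWPZ' hPWfix (fun u => (hchar u).mp) hf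

/-- **Theorem 2.12.** Let `Ã` be an arbitrary closed extension
`A_min ⊂ Ã ⊂ A_max` corresponding to `T : V → W`.  For each `λ ∈ ρ(Ã)` the formula
`M_Ã(λ) = pr_ζ (I − (Ã − λ)⁻¹(A_max − λ)) A_β⁻¹ i_{W→H}` defines a bounded operator
`W → V`, depending holomorphically on `λ ∈ ρ(Ã)`, which satisfies
`M_Ã(λ)((A z^λ)_W − T pr_ζ z^λ) = pr_ζ z^λ` for all `z^λ ∈ Z_λ` with `pr_ζ z^λ ∈ D(T)`.
Moreover, for `λ ∈ ρ(Ã) ∩ ρ(A_β)`, `−M_Ã(λ)` is the inverse of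
`T + G^λ_{V,W} : D(T) → W`.  Here `ρ(Ã)` is represented by an open set `U` carrying a
resolvent family `R`, and `ρ(A_β)` by a set `Uβ` carrying a resolvent family `Rβ`. -/
theorem stmt_15
    {H : Type*} [NormedAddCommGroup H] [InnerProductSpace ℂ H] [CompleteSpace H]
    (D D' Dβ DAt : Submodule ℂ H) (hβD : Dβ ≤ D) (hAtD : DAt ≤ D)
    (A : D →ₗ[ℂ] H) (A' : D' →ₗ[ℂ] H)
    -- 0 ∈ ρ(A_β)
    (Aβinv : H →L[ℂ] H)
    (h0ran : ∀ f : H, Aβinv f ∈ Dβ)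
    (h0left : ∀ u : D, (u : H) ∈ Dβ → Aβinv (A u) = (u : H))
    (h0right : ∀ f : H, A ⟨Aβinv f, hβD (h0ran f)⟩ = f)
    -- PZ' : orthogonal projection onto Z′ = ker A_max′
    (PZ' : H →L[ℂ] H)
    (hPZ'mem : ∀ x : H, ∃ h : PZ' x ∈ D', A' ⟨PZ' x, h⟩ = 0)
    (hPZ'fix : ∀ z : D', A' z = 0 → PZ' z = (z : H))
    (hPZ'orth : ∀ x : H, ∀ z : D', A' z = 0 → ⟪x - PZ' x, (z : H)⟫_ℂ = 0)
    -- V ⊂ Z and W ⊂ Z′ closed subspaces, PW the orthogonal projection onto W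
    (V W : Submodule ℂ H)
    (hVZ : V ≤ (LinearMap.ker A).map D.subtype)
    (hWZ' : W ≤ (LinearMap.ker A').map D'.subtype)
    (hVclosed : IsClosed (V : Set H)) (hWclosed : IsClosed (W : Set H))
    (PW : H →L[ℂ] H)
    (hPWmem : ∀ x : H, PW x ∈ W)
    (hPWfix : ∀ w ∈ W, PW w = w)
    (hPWorth : ∀ x : H, ∀ w ∈ W, ⟪x - PW x, w⟫_ℂ = 0)
    -- T : V → W, the operator associated with Ã by Theorem 2.1
    (T : H →ₗ.[ℂ] H)
    (hTdomV : T.domain ≤ V)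
    (hV : V = T.domain.topologicalClosure)
    (hTran : ∀ x : T.domain, T x ∈ W)
    (hTdom : ∀ x : H, x ∈ T.domain ↔
      ∃ u : D, (u : H) ∈ DAt ∧ (u : H) - Aβinv (A u) = x)
    (hTval : ∀ (u : D), (u : H) ∈ DAt →
      ∀ hx : ((u : H) - Aβinv (A u)) ∈ T.domain,
        T ⟨(u : H) - Aβinv (A u), hx⟩ = PW (A u))
    (hchar : ∀ u : D, (u : H) ∈ DAt ↔
      ∃ hx : ((u : H) - Aβinv (A u)) ∈ T.domain,
        PW (A u) = T ⟨(u : H) - Aβinv (A u), hx⟩)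
    -- U ⊆ ρ(Ã): open set with bounded resolvent family R ν = (Ã − ν)⁻¹
    (U : Set ℂ) (hUopen : IsOpen U)
    (R : ℂ → H →L[ℂ] H)
    (hRD : ∀ (ν : ℂ) (f : H), R ν f ∈ D)
    (hRAt : ∀ ν ∈ U, ∀ f : H, R ν f ∈ DAt)
    (hRleft : ∀ ν ∈ U, ∀ u : D, (u : H) ∈ DAt → R ν (A u - ν • (u : H)) = (u : H))
    (hRright : ∀ ν ∈ U, ∀ f : H, A ⟨R ν f, hRD ν f⟩ - ν • R ν f = f)
    -- Uβ ⊆ ρ(A_β): set with bounded resolvent family Rβ ν = (A_β − ν)⁻¹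
    (Uβ : Set ℂ)
    (Rβ : ℂ → H →L[ℂ] H)
    (hRβD : ∀ (ν : ℂ) (f : H), Rβ ν f ∈ Dβ)
    (hRβleft : ∀ ν ∈ Uβ, ∀ u : D, (u : H) ∈ Dβ → Rβ ν (A u - ν • (u : H)) = (u : H))
    (hRβright : ∀ ν ∈ Uβ, ∀ f : H,
      A ⟨Rβ ν f, hβD (hRβD ν f)⟩ - ν • Rβ ν f = f) :
    -- M_Ã(ν) f = pr_ζ ((I − (Ã − ν)⁻¹(A_max − ν)) A_β⁻¹ f), for f ∈ W
    let v : H → D := fun f => ⟨Aβinv f, hβD (h0ran f)⟩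
    let x : ℂ → H → D := fun ν f =>
      v f - ⟨R ν (A (v f) - ν • ((v f : D) : H)), hRD ν (A (v f) - ν • ((v f : D) : H))⟩
    let M : ℂ → H → H := fun ν f => ((x ν f : D) : H) - Aβinv (A (x ν f))
    -- M_Ã(ν) is a bounded operator from W to V
    (∀ ν ∈ U, ∀ f ∈ W, M ν f ∈ V) ∧
    (∀ ν ∈ U, Continuous fun f : W => M ν (f : H)) ∧
    -- holomorphic dependence on ν ∈ ρ(Ã)
    (∀ f ∈ W, DifferentiableOn ℂ (fun ν => M ν f) U) ∧
    -- the defining relation (2.36): M_Ã(ν)((A z)_W − T pr_ζ z) = pr_ζ z for z ∈ Z_ν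
    (∀ ν ∈ U, ∀ z : D, A z = ν • (z : H) →
      ∀ hb : ((z : H) - Aβinv (A z)) ∈ T.domain,
        M ν (PW (A z) - T ⟨(z : H) - Aβinv (A z), hb⟩) = (z : H) - Aβinv (A z)) ∧
    -- for ν ∈ ρ(Ã) ∩ ρ(A_β), −M_Ã(ν) is the inverse of T + G^ν_{V,W} : D(T) → W
    (∀ ν ∈ U ∩ Uβ,
      (∀ y : T.domain,
        M ν (T y + PW (-(ν • PZ' ((y : H) + ν • Rβ ν (y : H))))) = -((y : H))) ∧
      (∀ f ∈ W, ∃ hb : (-(M ν f)) ∈ T.domain,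
        T ⟨-(M ν f), hb⟩ + PW (-(ν • PZ' ((-(M ν f)) + ν • Rβ ν (-(M ν f))))) = f)) :=
  stmt_15_general D D' Dβ DAt hβD A A' Aβinv h0ran h0left h0right PZ' hPZ'orth V W hWZ' PW hPWmem
    hPWfix hPWorth T hTdomV hTran hTdom hchar U R hRD hRAt hRleft hRright Uβ Rβ hRβD hRβleft
    hRβright
end
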